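/- Let h : [0,∞) → [0,∞) be continuous with h(0) = 0, and for each t > 0 let F_t : [0,∞) → [0,∞) and n_t > 0. Suppose that (i) for every 0 < δ ≤ x, (F_t(x) - F_t(δ))/n_t → h(x) - h(δ) as t → ∞; (ii) there is a constant C ≥ 0 and t₀ > 0 such that F_t(x) ≤ C·h(x)·n_t for all x in a fixed interval [0, x₀] and all t ≥ t₀; and (iii) each F_t is nondecreasing with F_t(0) = 0. Then for every x ∈ [0, x₀], F_t(x)/n_t → h(x) as t → ∞. -/

import Mathlib

open Filter Set

theorem stmt0 (h : ℝ → ℝ) (F : ℝ → ℝ → ℝ) (n : ℝ → ℝ) (x₀ : ℝ)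
    (hcont : Continuous h) (h0 : h 0 = 0) (hpos : ∀ x ≥ 0, 0 ≤ h x)
    (hn : ∀ t > 0, 0 < n t)
    (hi : ∀ δ x : ℝ, 0 < δ → δ ≤ x →
      Tendsto (fun t => (F t x - F t δ) / n t) atTop (nhds (h x - h δ)))
    (hii : ∃ C ≥ (0:ℝ), ∃ t₀ > (0:ℝ), ∀ x ∈ Icc 0 x₀, ∀ t ≥ t₀,
      F t x ≤ C * h x * n t)
    (hiii : ∀ t > (0:ℝ), Monotone (F t) ∧ F t 0 = 0 ∧ ∀ x ≥ (0:ℝ), 0 ≤ F t x) :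
    ∀ x ∈ Icc 0 x₀, Tendsto (fun t => F t x / n t) atTop (nhds (h x)) := by
  obtain ⟨C, hC, t₀, ht₀, hdom⟩ := hii
  rintro x ⟨hx0, hxx₀⟩
  rcases eq_or_lt_of_le hx0 with hx | hx
  · -- x = 0
    have heq : ∀ᶠ t in atTop, (0:ℝ) = F t x / n t := by
      filter_upwards [eventually_gt_atTop (0:ℝ)] with t ht
      rw [← hx, (hiii t ht).2.1, zero_div]
    have : h x = 0 := by rw [← hx, h0]
    rw [this]
    exact Tendsto.congr' heq tendsto_const_nhds
  · rw [Metric.tendsto_atTop]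
    intro ε hε
    have hC1 : 0 < C + 1 := by linarith
    have hεC : 0 < ε / (2 * (C + 1)) := by positivity
    obtain ⟨δ', hδ'pos, hδ'⟩ := Metric.continuousAt_iff.mp hcont.continuousAt _ hεC
    set δ : ℝ := min x (δ' / 2) with hδdef
    have hδpos : 0 < δ := lt_min hx (by linarith)
    have hδx : δ ≤ x := min_le_left _ _
    have hδx₀ : δ ≤ x₀ := hδx.trans hxx₀
    have hδlt : dist δ 0 < δ' := by
      rw [Real.dist_eq, sub_zero, abs_of_pos hδpos]
      calc δ ≤ δ' / 2 := min_le_right _ _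
        _ < δ' := by linarith
    have hhδ : h δ < ε / (2 * (C + 1)) := by
      have := hδ' hδlt
      rw [Real.dist_eq, h0, sub_zero, abs_of_nonneg (hpos δ hδpos.le)] at this
      exact this
    have hhδ0 : 0 ≤ h δ := hpos δ hδpos.le
    obtain ⟨N, hN⟩ := Metric.tendsto_atTop.mp (hi δ x hδpos hδx) (ε / 2) (by linarith)
    refine ⟨max N (max t₀ 1), fun t ht => ?_⟩
    have htN : t ≥ N := le_trans (le_max_left _ _) ht
    have htt₀ : t ≥ t₀ := le_trans (le_trans (le_max_left _ _) (le_max_right _ _)) ht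
    have ht1 : (0:ℝ) < t := lt_of_lt_of_le one_pos
      (le_trans (le_trans (le_max_right _ _) (le_max_right _ _)) ht)
    have hnt : 0 < n t := hn t ht1
    have hFδ : 0 ≤ F t δ := (hiii t ht1).2.2 δ hδpos.le
    have hdomδ : F t δ ≤ C * h δ * n t := hdom δ ⟨hδpos.le, hδx₀⟩ t htt₀
    have hFδdiv : F t δ / n t ≤ C * h δ := by
      rw [div_le_iff₀ hnt]; exact hdomδ
    have hFδdiv0 : 0 ≤ F t δ / n t := div_nonneg hFδ hnt.le
    have hinc := hN t htN
    rw [Real.dist_eq] at hinc ⊢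
    have hsplit : F t x / n t - h x =
        ((F t x - F t δ) / n t - (h x - h δ)) + (F t δ / n t - h δ) := by
      field_simp
      ring
    rw [hsplit]
    have habs2 : |F t δ / n t - h δ| ≤ (C + 1) * h δ := by
      rw [abs_le]
      constructor <;> nlinarith
    have hCδ : (C + 1) * h δ < ε / 2 := by
      have := mul_lt_mul_of_pos_left hhδ hC1
      calc (C + 1) * h δ < (C + 1) * (ε / (2 * (C + 1))) := this
        _ = ε / 2 := by field_simp
    calc |((F t x - F t δ) / n t - (h x - h δ)) + (F t δ / n t - h δ)|
        ≤ |(F t x - F t δ) / n t - (h x - h δ)| + |F t δ / n t - h δ| := abs_add_le _ _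
      _ < ε / 2 + ε / 2 := by
          have h2 := habs2.trans hCδ.le
          linarith
      _ = ε := by ring
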